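/- Valid state preservation: if valid_state gs, the asset aid exists on the source chain with regulatory state s, reg_transition s action = Some s', sync source action aid gs = Some gs', and the set of connected chains of aid is finite, then valid_state gs'. -/
import Mathlib


inductive RegState | ACTIVE | FROZEN | SEIZED | CONFISCATED | RESTRICTED
deriving DecidableEq

inductive RegAction | FREEZE | SEIZE | CONFISCATE | RESTRICT | UNFREEZE | UNRESTRICT | RELEASE
deriving DecidableEq

open RegState RegAction

def regTransition : RegState → RegAction → Option RegState
  | ACTIVE, FREEZE => some FROZEN
  | ACTIVE, SEIZE => some SEIZED
  | ACTIVE, CONFISCATE => some CONFISCATED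
  | ACTIVE, RESTRICT => some RESTRICTED
  | FROZEN, SEIZE => some SEIZED
  | FROZEN, CONFISCATE => some CONFISCATED
  | FROZEN, UNFREEZE => some ACTIVE
  | SEIZED, CONFISCATE => some CONFISCATED
  | SEIZED, RELEASE => some ACTIVE
  | RESTRICTED, FREEZE => some FROZEN
  | RESTRICTED, CONFISCATE => some CONFISCATED
  | RESTRICTED, UNRESTRICT => some ACTIVE
  | _, _ => none

/-- Global state: per-chain asset regulatory states and per-asset locks. -/
structure GlobalState (ChainId AssetId : Type) where
  chains : ChainId → AssetId → Option RegState
  locks : AssetId → Bool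

variable {ChainId AssetId : Type}

def getRegState (gs : GlobalState ChainId AssetId) (c : ChainId) (aid : AssetId) :
    Option RegState := gs.chains c aid

def assetExists (gs : GlobalState ChainId AssetId) (c : ChainId) (aid : AssetId) : Prop :=
  gs.chains c aid ≠ none

def isLocked (gs : GlobalState ChainId AssetId) (aid : AssetId) : Prop :=
  gs.locks aid = true

def connectedChains (gs : GlobalState ChainId AssetId) (aid : AssetId) : Set ChainId :=
  {c | gs.chains c aid ≠ none}

def acquireLock [DecidableEq AssetId] (gs : GlobalState ChainId AssetId) (aid : AssetId) :
    Option (GlobalState ChainId AssetId) :=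
  if gs.locks aid then none
  else some { gs with locks := fun a => if a = aid then true else gs.locks a }

def releaseLock [DecidableEq AssetId] (gs : GlobalState ChainId AssetId) (aid : AssetId) :
    GlobalState ChainId AssetId :=
  { gs with locks := fun a => if a = aid then false else gs.locks a }

/-- Update the regulatory state of `aid` to `s'` on all connected chains. -/
def updateAllChains [DecidableEq AssetId] (gs : GlobalState ChainId AssetId)
    (aid : AssetId) (s' : RegState) : GlobalState ChainId AssetId :=
  { gs with chains := fun c a =>
      if a = aid then (if (gs.chains c aid).isSome then some s' else gs.chains c a)
      else gs.chains c a }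

/-- Check state, validate transition, acquire lock, update all connected chains,
release lock; `none` if any step fails. -/
def sync [DecidableEq AssetId] (source : ChainId) (action : RegAction) (aid : AssetId)
    (gs : GlobalState ChainId AssetId) : Option (GlobalState ChainId AssetId) :=
  match getRegState gs source aid with
  | none => none
  | some s =>
    match regTransition s action with
    | none => none
    | some s' =>
      match acquireLock gs aid with
      | none => none
      | some gs_locked => some (releaseLock (updateAllChains gs_locked aid s') aid)

/-- All chains holding the same asset agree on its regulatory state. -/
def consistentState (gs : GlobalState ChainId AssetId) : Prop :=
  ∀ c1 c2 aid s1 s2, gs.chains c1 aid = some s1 → gs.chains c2 aid = some s2 → s1 = s2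

/-- No asset is locked in quiescent states. -/
def noLockedWithoutReason (gs : GlobalState ChainId AssetId) : Prop :=
  ∀ aid, gs.locks aid = false

def validState (gs : GlobalState ChainId AssetId) : Prop :=
  consistentState gs ∧ noLockedWithoutReason gs

theorem valid_state_preservation [DecidableEq AssetId]
    (gs gs' : GlobalState ChainId AssetId)
    (source : ChainId) (action : RegAction) (aid : AssetId) (s s' : RegState)
    (hvalid : validState gs)
    (hexists : assetExists gs source aid)
    (hcur : getRegState gs source aid = some s)
    (htrans : regTransition s action = some s')
    (hsync : sync source action aid gs = some gs')
    (hfin : (connectedChains gs aid).Finite) :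
    validState gs' := by
  have hlock : gs.locks aid = false := hvalid.2 aid
  unfold sync at hsync
  rw [hcur] at hsync
  simp only [htrans] at hsync
  unfold acquireLock at hsync
  rw [hlock] at hsync
  simp only [Bool.false_eq_true, if_false, Option.some.injEq] at hsync
  subst hsync
  constructor
  · intro c1 c2 a s1 s2 h1 h2
    simp only [releaseLock, updateAllChains] at h1 h2
    by_cases ha : a = aid
    · simp only [ha, if_pos rfl] at h1 h2
      by_cases h1s : (gs.chains c1 aid).isSome <;> by_cases h2s : (gs.chains c2 aid).isSome <;>
        simp_all
    · simp only [if_neg ha] at h1 h2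
      exact hvalid.1 c1 c2 a s1 s2 h1 h2
  · intro a
    simp only [releaseLock, updateAllChains]
    by_cases ha : a = aid
    · simp [ha]
    · simp [ha, hvalid.2 a]
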